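/- arXiv:math/0507397 — 4 statements merged into one kernel-verified Lean document; each statement's English description precedes it below -/
import Mathlib

section
/- Let π be a special partition of [2n+1] (non-crossing, n+1 blocks, no block containing two consecutive integers). If b < b' are two elements of the same block of π with no element of that block strictly between them, then b' - b is even. -/
/-
A non-crossing partition of a finite set `S ⊆ ℕ` in which neighbours in `S` lie in different
blocks has at least `(#S + 1) / 2` blocks. Indeed, if `b < b'` are consecutive elements of a block,
non-crossing splits the blocks into those of `S ∩ (b, b')` and those of `S \ (b, b']`, two
partitions of the same kind whose sizes add up to `#S - 1`; induct on `#S`. A special partition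
of `[2n+1]` attains the bound, so both pieces attain it as well, and for `S ∩ (b, b')`, of size
`b' - b - 1`, this forces that size to be odd.
-/

open scoped Classical

def SameBlock {m : ℕ} (P : Finpartition (Finset.Icc 1 m)) (a b : ℕ) : Prop :=
  ∃ B ∈ P.parts, a ∈ B ∧ b ∈ B

def NonCrossing {m : ℕ} (P : Finpartition (Finset.Icc 1 m)) : Prop :=
  ∀ a b c d : ℕ, a < b → b < c → c < d → SameBlock P a c → SameBlock P b d →
    SameBlock P a b

def NoConsec {m : ℕ} (P : Finpartition (Finset.Icc 1 m)) : Prop :=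
  ∀ i : ℕ, ¬ SameBlock P i (i + 1)

def SpecialPartition (n : ℕ) (P : Finpartition (Finset.Icc 1 (2 * n + 1))) : Prop :=
  NonCrossing P ∧ NoConsec P ∧ P.parts.card = n + 1

def InS (n : ℕ) (s : ℕ → ℕ) : Prop :=
  (∀ i, 1 ≤ i → i ≤ n → 1 ≤ s i ∧ s i ≤ i) ∧
  (∀ i j r, 1 ≤ i → i ≤ n → s i = j → 1 ≤ r → r ≤ j - 1 → s (i - r) ≤ j - r)

noncomputable def gap {m : ℕ} (P : Finpartition (Finset.Icc 1 m)) (i : ℕ) : ℕ :=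
  sInf {b | i < b ∧ SameBlock P i b} - i

noncomputable def aSeq (n : ℕ) (P : Finpartition (Finset.Icc 1 (2 * n + 1)))
    (j : ℕ) : ℕ :=
  ((((Finset.Icc 1 (2 * n + 1)).filter (fun i => gap P i ≠ 0)).sort (· ≤ ·)).getD
    (n - j) 0) / 2

open Finset

section Labelling

variable {α : Type*} {f : ℕ → α} {S T : Finset ℕ} {b b' : ℕ}

/- A labelling `f : ℕ → α` encodes the partition of `S` into the fibres of `f`;
its number of blocks is `#(S.image f)`. -/

def IsNoncrossingOn (f : ℕ → α) (S : Finset ℕ) : Prop :=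
  ∀ ⦃a b c d⦄, a ∈ S → b ∈ S → c ∈ S → d ∈ S → a < b → b < c → c < d →
    f a = f c → f b = f d → f a = f b

def SeparatesNeighborsOn (f : ℕ → α) (S : Finset ℕ) : Prop :=
  ∀ ⦃a c⦄, a ∈ S → c ∈ S → a < c → (∀ x ∈ S, ¬ (a < x ∧ x < c)) → f a ≠ f c

theorem IsNoncrossingOn.mono (h : IsNoncrossingOn f S) (hTS : T ⊆ S) : IsNoncrossingOn f T :=
  fun _ _ _ _ ha hb hc hd ↦ h (hTS ha) (hTS hb) (hTS hc) (hTS hd)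

theorem SeparatesNeighborsOn.mono_of_convex (h : SeparatesNeighborsOn f S) (hTS : T ⊆ S)
    (hconv : ∀ a ∈ T, ∀ c ∈ T, ∀ x ∈ S, a < x → x < c → x ∈ T) :
    SeparatesNeighborsOn f T :=
  fun a c ha hc hac hnb ↦ h (hTS ha) (hTS hc) hac fun x hx hx' ↦
    hnb x (hconv a ha c hc x hx hx'.1 hx'.2) hx'

theorem SeparatesNeighborsOn.inter_Ioo (h : SeparatesNeighborsOn f S) :
    SeparatesNeighborsOn f (S ∩ Ioo b b') :=
  h.mono_of_convex inter_subset_left fun a ha c hc x hx hax hxc ↦ by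
    simp only [mem_inter, mem_Ioo] at ha hc ⊢
    exact ⟨hx, by omega, by omega⟩

/-- Removing the stretch `(b, b']` leaves `b` and the successor of `b'` as new neighbours;
they get distinct labels because `f b = f b'` and `b'` is separated from its successor. -/
theorem SeparatesNeighborsOn.sdiff_Ioc (h : SeparatesNeighborsOn f S) (hb : b ∈ S)
    (hb' : b' ∈ S) (hf : f b = f b') : SeparatesNeighborsOn f (S \ Ioc b b') := by
  intro a c ha hc hac hnb hfac
  simp only [mem_sdiff, mem_Ioc] at ha hc hnb
  by_cases hS : ∀ x ∈ S, ¬ (a < x ∧ x < c)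
  · exact h ha.1 hc.1 hac hS hfac
  push Not at hS
  obtain ⟨x, hx, hax, hxc⟩ := hS
  have hbx : b < x ∧ x ≤ b' := by
    by_contra hbx
    exact hnb x ⟨hx, hbx⟩ ⟨hax, hxc⟩
  have hab : a = b := by
    by_contra hne
    exact hnb b ⟨hb, by omega⟩ ⟨by omega, by omega⟩
  subst hab
  refine h hb' hc.1 (by omega) (fun y hy hy' ↦ hnb y ⟨hy, by omega⟩ ⟨by omega, hy'.2⟩) ?_
  rw [← hf, hfac]

theorem SeparatesNeighborsOn.nonempty_inter_Ioo (h : SeparatesNeighborsOn f S) (hb : b ∈ S)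
    (hb' : b' ∈ S) (hbb' : b < b') (hf : f b = f b') : (S ∩ Ioo b b').Nonempty := by
  by_contra hI
  refine h hb hb' hbb' (fun x hx hx' ↦ hI ⟨x, ?_⟩) hf
  simpa [hx] using hx'

theorem card_eq_card_inter_Ioo_add_card_sdiff_Ioc (hb' : b' ∈ S) (hbb' : b < b') :
    #S = #(S ∩ Ioo b b') + #(S \ Ioc b b') + 1 := by
  have hIoc : S ∩ Ioc b b' = insert b' (S ∩ Ioo b b') := by
    ext x
    simp only [mem_inter, mem_Ioc, mem_insert, mem_Ioo]
    grind
  rw [← card_sdiff_add_card_inter S (Ioc b b'), hIoc, card_insert_of_notMem (by simp)]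
  omega

variable [DecidableEq α]

/-- By non-crossing with the pair `b, b'`, no block meets both pieces; `b'` itself lies in the
block of `b`. -/
theorem IsNoncrossingOn.card_image_eq_add (h : IsNoncrossingOn f S) (hb : b ∈ S) (hb' : b' ∈ S)
    (hf : f b = f b') (hgap : ∀ x ∈ S, b < x → x < b' → f x ≠ f b) :
    #(S.image f) = #((S ∩ Ioo b b').image f) + #((S \ Ioc b b').image f) := by
  have hsplit : S.image f = (S ∩ Ioo b b').image f ∪ (S \ Ioc b b').image f := by
    refine Subset.antisymm (fun _ hy ↦ ?_)
      (union_subset (image_subset_image inter_subset_left) (image_subset_image sdiff_subset))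
    obtain ⟨x, hx, rfl⟩ := mem_image.1 hy
    by_cases hxI : b < x ∧ x < b'
    · exact mem_union_left _ (mem_image_of_mem f (mem_inter.2 ⟨hx, mem_Ioo.2 hxI⟩))
    by_cases hxb' : x = b'
    · subst hxb'
      rw [← hf]
      exact mem_union_right _ (mem_image_of_mem f (mem_sdiff.2 ⟨hb, by simp⟩))
    · exact mem_union_right _ (mem_image_of_mem f (mem_sdiff.2 ⟨hx, by simp; omega⟩))
  rw [hsplit, card_union_of_disjoint (disjoint_left.2 ?_)]
  rintro _ hyI hyR
  obtain ⟨x, hx, rfl⟩ := mem_image.1 hyI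
  obtain ⟨y, hy, hyx⟩ := mem_image.1 hyR
  simp only [mem_inter, mem_Ioo, mem_sdiff, mem_Ioc] at hx hy
  apply hgap x hx.1 hx.2.1 hx.2.2
  rcases lt_trichotomy y b with hyb | rfl | hby
  · rw [← hyx]
    exact h hy.1 hb hx.1 hb' hyb hx.2.1 hx.2.2 hyx hf
  · exact hyx.symm
  · exact (h hb hx.1 hb' hy.1 hx.2.1 hx.2.2 (by omega) hf hyx.symm).symm

theorem IsNoncrossingOn.card_add_one_le (h : IsNoncrossingOn f S)
    (hsep : SeparatesNeighborsOn f S) (hS : S.Nonempty) : #S + 1 ≤ 2 * #(S.image f) := by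
  induction S using Finset.strongInduction with
  | H S ih =>
  set v := S.max' hS
  have hv : v ∈ S := S.max'_mem hS
  have hv_ssubset : ∀ T ⊆ S, v ∉ T → T ⊂ S := fun T hTS hvT ↦
    (ssubset_iff_of_subset hTS).2 ⟨v, hv, hvT⟩
  by_cases hblock : ∃ b ∈ S, b < v ∧ f b = f v
  · set B := S.filter (fun x ↦ x < v ∧ f x = f v)
    have hBne : B.Nonempty := filter_nonempty_iff.2 hblock
    set b := B.max' hBne
    obtain ⟨hb, hbv, hfb⟩ : b ∈ S ∧ b < v ∧ f b = f v := mem_filter.1 (B.max'_mem hBne)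
    have hgap : ∀ x ∈ S, b < x → x < v → f x ≠ f b := fun x hx hbx hxv hfx ↦
      (B.le_max' x (by simp [B, hx, hxv, hfx, hfb])).not_gt hbx
    have hI := ih _ (hv_ssubset _ inter_subset_left (by simp)) (h.mono inter_subset_left)
      hsep.inter_Ioo (hsep.nonempty_inter_Ioo hb hv hbv hfb)
    have hR := ih _ (hv_ssubset _ sdiff_subset (by simp [hbv])) (h.mono sdiff_subset)
      (hsep.sdiff_Ioc hb hv hfb) ⟨b, by simp [hb]⟩
    rw [card_eq_card_inter_Ioo_add_card_sdiff_Ioc hv hbv, h.card_image_eq_add hb hv hfb hgap]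
    omega
  · push Not at hblock
    have hfv : f v ∉ (S.erase v).image f := by
      intro hmem
      obtain ⟨x, hx, hfx⟩ := mem_image.1 hmem
      obtain ⟨hxv, hxS⟩ := mem_erase.1 hx
      exact hblock x hxS (lt_of_le_of_ne (S.le_max' x hxS) hxv) hfx
    have himage : S.image f = insert (f v) ((S.erase v).image f) := by
      rw [← image_insert, insert_erase hv]
    rw [himage, card_insert_of_notMem hfv, ← card_erase_add_one hv]
    rcases (S.erase v).eq_empty_or_nonempty with hS' | hS'
    · simp [hS']
    · have := ih _ (erase_ssubset hv) (h.mono (erase_subset _ _))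
        (hsep.mono_of_convex (erase_subset _ _) fun a _ c hc x hx _ hxc ↦ ?_) hS'
      · omega
      · exact mem_erase.2 ⟨(hxc.trans_le (S.le_max' c (mem_of_mem_erase hc))).ne, hx⟩

/-- Equality in `card_add_one_le` on `S` forces equality on the stretch `(b, b')`. -/
theorem IsNoncrossingOn.odd_card_inter_Ioo (h : IsNoncrossingOn f S)
    (hsep : SeparatesNeighborsOn f S) (hext : 2 * #(S.image f) ≤ #S + 1) (hb : b ∈ S)
    (hb' : b' ∈ S) (hbb' : b < b') (hf : f b = f b')
    (hgap : ∀ x ∈ S, b < x → x < b' → f x ≠ f b) : Odd #(S ∩ Ioo b b') := by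
  have hI := (h.mono inter_subset_left).card_add_one_le hsep.inter_Ioo
    (hsep.nonempty_inter_Ioo hb hb' hbb' hf)
  have hR := (h.mono sdiff_subset).card_add_one_le (hsep.sdiff_Ioc hb hb' hf) ⟨b, by simp [hb]⟩
  rw [card_eq_card_inter_Ioo_add_card_sdiff_Ioc hb' hbb', h.card_image_eq_add hb hb' hf hgap]
    at hext
  exact ⟨#((S ∩ Ioo b b').image f) - 1, by omega⟩

end Labelling

section Finpartition

variable {m : ℕ} {P : Finpartition (Icc 1 m)}

theorem sameBlock_iff_part_eq {a b : ℕ} (ha : a ∈ Icc 1 m) :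
    SameBlock P a b ↔ P.part a = P.part b := by
  rw [SameBlock, ← P.mem_part_iff_exists]
  exact ⟨fun hab ↦ P.part_eq_of_mem (P.part_mem.2 (P.part_nonempty.1 ⟨a, hab⟩)) hab,
    fun hab ↦ hab ▸ P.mem_part ha⟩

theorem NonCrossing.isNoncrossingOn_part (h : NonCrossing P) :
    IsNoncrossingOn P.part (Icc 1 m) := by
  intro a b c d ha hb _ _ hab hbc hcd hac hbd
  rw [← sameBlock_iff_part_eq ha] at hac ⊢
  exact h a b c d hab hbc hcd hac ((sameBlock_iff_part_eq hb).2 hbd)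

theorem NoConsec.separatesNeighborsOn_part (h : NoConsec P) :
    SeparatesNeighborsOn P.part (Icc 1 m) := by
  intro a c ha hc hac hnb hf
  obtain rfl : c = a + 1 := by
    by_contra hne
    simp only [mem_Icc] at ha hc hnb
    exact hnb (a + 1) ⟨by omega, by omega⟩ ⟨by omega, by omega⟩
  exact h a ((sameBlock_iff_part_eq ha).2 hf)

theorem card_image_part_le (P : Finpartition (Icc 1 m)) :
    #((Icc 1 m).image P.part) ≤ #P.parts :=
  card_le_card (image_subset_iff.2 fun _ hx ↦ P.part_mem.2 hx)

end Finpartition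

theorem stmt4 (n : ℕ) (P : Finpartition (Finset.Icc 1 (2 * n + 1)))
    (h : SpecialPartition n P) (B : Finset ℕ) (hB : B ∈ P.parts)
    (b b' : ℕ) (hb : b ∈ B) (hb' : b' ∈ B) (hlt : b < b')
    (hbetween : ∀ x ∈ B, ¬ (b < x ∧ x < b')) :
    Even (b' - b) := by
  obtain ⟨hNC, hNoConsec, hcard⟩ := h
  have hbS := P.le hB hb
  have hb'S := P.le hB hb'
  have hext : 2 * #((Icc 1 (2 * n + 1)).image P.part) ≤ #(Icc 1 (2 * n + 1)) + 1 := by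
    have := card_image_part_le P
    simp only [Nat.card_Icc]
    omega
  have hodd := hNC.isNoncrossingOn_part.odd_card_inter_Ioo hNoConsec.separatesNeighborsOn_part
    hext hbS hb'S hlt (by rw [P.part_eq_of_mem hB hb, P.part_eq_of_mem hB hb'])
    fun x hx hbx hxb' hfx ↦ hbetween x (P.part_eq_of_mem hB hb ▸ hfx ▸ P.mem_part hx) ⟨hbx, hxb'⟩
  have hIoo : Icc 1 (2 * n + 1) ∩ Ioo b b' = Ioo b b' := by
    refine inter_eq_right.2 fun x hx ↦ ?_
    simp only [mem_Icc, mem_Ioo] at hx hbS hb'S ⊢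
    omega
  obtain ⟨k, hk⟩ := hodd
  rw [hIoo, Nat.card_Ioo] at hk
  exact ⟨k + 1, by omega⟩
end

section
/- Let π be a special partition of [2n+1] and let b < b' be consecutive entries of a block with b' - b = 2k. Then the elements b+1, b+2, ..., b'-1 are partitioned by the blocks of π into exactly k blocks, each of which is entirely contained in the interval {b+1, ..., b'-1}. -/
open scoped Classical

/-!
Every block has exactly one last element, so a family of blocks is counted by the last elements
of its members. Call `x` an arc start if it is not the last element of its block. Sending an arc
start `x` to the block of `x + 1` is injective and never hits the block of an element `a ≤ x`;
both facts come from one non-crossing argument. Hence a union `U` of blocks with least element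
`a` satisfies `#U + 1 ≤ 2 · #blocks`, up to one for each arc start `x` with `x + 1 ∉ U`.

The `2k - 1` elements strictly between `b` and `b'` form a union of blocks, so they carry at least
`k` blocks; on the complement only `x = b` escapes the injection, so it carries at least
`n + 1 - k` blocks. As there are `n + 1` blocks in all, both bounds are equalities.
-/

open Finset

variable {m : ℕ} {P : Finpartition (Icc 1 m)}

lemma sameBlock_iff_mem_part {x y : ℕ} : SameBlock P x y ↔ y ∈ P.part x := by
  rw [P.mem_part_iff_exists]
  exact exists_congr fun _ => and_congr_right fun _ => and_comm

lemma SameBlock.symm {x y : ℕ} (h : SameBlock P x y) : SameBlock P y x :=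
  let ⟨B, hB, hx, hy⟩ := h; ⟨B, hB, hy, hx⟩

lemma SameBlock.trans {x y z : ℕ} (h₁ : SameBlock P x y) (h₂ : SameBlock P y z) :
    SameBlock P x z := by
  obtain ⟨B, hB, hx, hy⟩ := h₁
  obtain ⟨C, hC, hy', hz⟩ := h₂
  exact ⟨B, hB, hx, P.eq_of_mem_parts hC hB hy' hy ▸ hz⟩

lemma sameBlock_of_part_eq {x y : ℕ} (hy : y ∈ Icc 1 m) (h : P.part y = P.part x) :
    SameBlock P x y :=
  sameBlock_iff_mem_part.2 (h ▸ P.mem_part hy)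

def IsArcStart (P : Finpartition (Icc 1 m)) (x : ℕ) : Prop :=
  ∃ y, x < y ∧ SameBlock P x y

lemma IsArcStart.succ_mem {x : ℕ} (hx : IsArcStart P x) : x + 1 ∈ Icc 1 m := by
  obtain ⟨y, hxy, B, hB, -, hy⟩ := hx
  have := mem_Icc.1 (P.le hB hy)
  exact mem_Icc.2 ⟨by omega, by omega⟩

lemma NonCrossing.sameBlock_of_mem_Ioo (hnc : NonCrossing P) {b b' x y : ℕ}
    (hbb' : SameBlock P b b') (hx : x ∈ Ioo b b') (hxy : SameBlock P x y)
    (hy : y ∉ Ioo b b') : SameBlock P b x := by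
  rw [mem_Ioo] at hx hy
  rcases lt_trichotomy y b with hyb | rfl | hby
  · exact (hnc y b x b' hyb hx.1 hx.2 hxy.symm hbb').symm.trans hxy.symm
  · exact hxy.symm
  obtain rfl | hyb' := (show b' ≤ y by omega).eq_or_lt
  · exact hbb'.trans hxy.symm
  · exact hnc b x b' y hx.1 hx.2 hyb' hbb' hxy

lemma NonCrossing.part_subset_Ioo (hnc : NonCrossing P) {B : Finset ℕ} (hB : B ∈ P.parts)
    {b b' x : ℕ} (hb : b ∈ B) (hb' : b' ∈ B) (hbetween : ∀ z ∈ B, ¬ (b < z ∧ z < b'))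
    (hx : x ∈ Ioo b b') : P.part x ⊆ Ioo b b' := fun y hy => by
  by_contra hy'
  obtain ⟨C, hC, hbC, hxC⟩ :=
    hnc.sameBlock_of_mem_Ioo ⟨B, hB, hb, hb'⟩ hx (sameBlock_iff_mem_part.2 hy) hy'
  exact hbetween x (P.eq_of_mem_parts hC hB hbC hb ▸ hxC) (mem_Ioo.1 hx)

lemma card_filter_not_isArcStart {U : Finset ℕ} (hU : U ⊆ Icc 1 m)
    (hUP : ∀ x ∈ U, P.part x ⊆ U) :
    #(U.filter fun x => ¬ IsArcStart P x) = #(P.parts.filter (· ⊆ U)) := by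
  have hlast {x y : ℕ} (hx : ¬ IsArcStart P x) (hy : y ∈ P.part x) : y ≤ x :=
    not_lt.1 fun hxy => hx ⟨y, hxy, sameBlock_iff_mem_part.2 hy⟩
  refine card_bij (fun x _ => P.part x) (fun x hx => ?_) (fun x hx x' hx' h => ?_) fun K hK => ?_
  · obtain ⟨hxU, -⟩ := mem_filter.1 hx
    exact mem_filter.2 ⟨P.part_mem.2 (hU hxU), hUP x hxU⟩
  · obtain ⟨hxU, hx⟩ := mem_filter.1 hx
    obtain ⟨hxU', hx'⟩ := mem_filter.1 hx'
    exact le_antisymm (hlast hx' (h ▸ P.mem_part (hU hxU)))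
      (hlast hx (h.symm ▸ P.mem_part (hU hxU')))
  · obtain ⟨hK, hKU⟩ := mem_filter.1 hK
    have hne := P.nonempty_of_mem_parts hK
    have hpart : P.part (K.max' hne) = K := P.part_eq_of_mem hK (K.max'_mem hne)
    refine ⟨K.max' hne, mem_filter.2 ⟨hKU (K.max'_mem hne), ?_⟩, hpart⟩
    rintro ⟨y, hy, hsame⟩
    exact (K.le_max' y (hpart ▸ sameBlock_iff_mem_part.1 hsame)).not_gt hy

section Arcs

variable (hnc : NonCrossing P) (hP : NoConsec P)
include hnc hP

lemma not_sameBlock_succ_of_isArcStart {a x : ℕ} (hax : a ≤ x) (hx : IsArcStart P x) :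
    ¬ SameBlock P a (x + 1) := by
  obtain ⟨y, hxy, hsame⟩ := hx
  intro ha
  obtain rfl | hax := hax.eq_or_lt
  · exact hP a ha
  have hxy' : x + 1 < y := lt_of_le_of_ne hxy fun h => hP x (h ▸ hsame)
  exact hP x ((hnc a x (x + 1) y hax (lt_add_one x) hxy' ha hsame).symm.trans ha)

lemma card_add_one_le_of_isArcStart {a : ℕ} {X : Finset ℕ}
    {T : Finset (Finset ℕ)} (hX : ∀ x ∈ X, a ≤ x ∧ IsArcStart P x)
    (hXT : ∀ x ∈ X, P.part (x + 1) ∈ T) (haT : P.part a ∈ T) : #X + 1 ≤ #T := by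
  rw [← card_erase_add_one haT, add_le_add_iff_right]
  refine card_le_card_of_injOn (fun x => P.part (x + 1))
    (fun x hx => mem_erase.2 ⟨?_, hXT x hx⟩) ?_
  · exact fun h => not_sameBlock_succ_of_isArcStart hnc hP (hX x hx).1 (hX x hx).2 <|
      sameBlock_of_part_eq (hX x hx).2.succ_mem h
  · intro x hx z hz h
    by_contra hxz
    wlog hlt : x < z generalizing x z
    · exact this hz hx h.symm (Ne.symm hxz) (by omega)
    exact not_sameBlock_succ_of_isArcStart hnc hP hlt (hX z hz).2 <|
      sameBlock_of_part_eq (hX z hz).2.succ_mem h.symm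

lemma card_add_one_le_two_mul_card_parts_subset {U E : Finset ℕ} {a : ℕ} (hU : U ⊆ Icc 1 m)
    (hUP : ∀ x ∈ U, P.part x ⊆ U) (haU : a ∈ U) (ha : ∀ x ∈ U, a ≤ x)
    (hE : ∀ x ∈ U, IsArcStart P x → x + 1 ∈ U ∨ x ∈ E) :
    #U + 1 ≤ 2 * #(P.parts.filter (· ⊆ U)) + #E := by
  have hT {x : ℕ} (hx : x ∈ U) : P.part x ∈ P.parts.filter (· ⊆ U) :=
    mem_filter.2 ⟨P.part_mem.2 (hU hx), hUP x hx⟩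
  have hstarts : #((U \ E).filter (IsArcStart P)) + 1 ≤ #(P.parts.filter (· ⊆ U)) := by
    refine card_add_one_le_of_isArcStart hnc hP (a := a) (fun x hx => ?_) (fun x hx => ?_) (hT haU)
    · obtain ⟨hx, hstart⟩ := mem_filter.1 hx
      exact ⟨ha x (mem_sdiff.1 hx).1, hstart⟩
    · obtain ⟨hx, hstart⟩ := mem_filter.1 hx
      obtain ⟨hxU, hxE⟩ := mem_sdiff.1 hx
      exact hT ((hE x hxU hstart).resolve_right hxE)
  have hsplit : #(U.filter (IsArcStart P)) ≤ #((U \ E).filter (IsArcStart P)) + #E := by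
    refine (card_le_card fun x hx => ?_).trans (card_union_le _ _)
    obtain ⟨hxU, hstart⟩ := mem_filter.1 hx
    by_cases hxE : x ∈ E
    · exact mem_union_right _ hxE
    · exact mem_union_left _ (mem_filter.2 ⟨mem_sdiff.2 ⟨hxU, hxE⟩, hstart⟩)
  have hlast := card_filter_not_isArcStart (P := P) hU hUP
  have := card_filter_add_card_filter_not (s := U) (p := IsArcStart P)
  omega

variable {b b' : ℕ} (hI : ∀ x ∈ Ioo b b', P.part x ⊆ Ioo b b')
include hI

lemma le_two_mul_card_parts_subset_Ioo (hbb' : b + 1 < b') (hb' : b' ≤ m) :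
    b' - b ≤ 2 * #(P.parts.filter (· ⊆ Ioo b b')) := by
  have hIoo : Ioo b b' ⊆ Icc 1 m := fun x hx => by
    simp only [mem_Ioo, mem_Icc] at hx ⊢; omega
  have hsucc (x) (hx : x ∈ Ioo b b') (hstart : IsArcStart P x) : x + 1 ∈ Ioo b b' := by
    obtain ⟨y, hxy, hsame⟩ := hstart
    have hy := hI x hx (sameBlock_iff_mem_part.1 hsame)
    simp only [mem_Ioo] at hx hy ⊢
    omega
  have := card_add_one_le_two_mul_card_parts_subset hnc hP hIoo hI
    (E := ∅) (mem_Ioo.2 ⟨by omega, by omega⟩) (fun x hx => (mem_Ioo.1 hx).1)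
    fun x hx hstart => Or.inl (hsucc x hx hstart)
  rw [Nat.card_Ioo, card_empty] at this
  omega

lemma le_two_mul_card_parts_subset_sdiff_Ioo (hb : 1 ≤ b) (hbb' : b < b') (hb' : b' ≤ m) :
    m + 1 ≤ 2 * #(P.parts.filter (· ⊆ Icc 1 m \ Ioo b b')) + (b' - b) := by
  have hIoo : Ioo b b' ⊆ Icc 1 m := fun x hx => by
    simp only [mem_Ioo, mem_Icc] at hx ⊢; omega
  have hUP (x) (hx : x ∈ Icc 1 m \ Ioo b b') : P.part x ⊆ Icc 1 m \ Ioo b b' := fun y hy =>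
    mem_sdiff.2 ⟨P.part_subset x hy, fun hy' => (mem_sdiff.1 hx).2 <|
      hI y hy' (sameBlock_iff_mem_part.1 (sameBlock_iff_mem_part.2 hy).symm)⟩
  have h1 : 1 ∈ Icc 1 m \ Ioo b b' := by
    simp only [mem_sdiff, mem_Icc, mem_Ioo]; omega
  have hE (x) (hx : x ∈ Icc 1 m \ Ioo b b') (hstart : IsArcStart P x) :
      x + 1 ∈ Icc 1 m \ Ioo b b' ∨ x ∈ ({b} : Finset ℕ) := by
    have hx1 := hstart.succ_mem
    simp only [mem_sdiff, mem_Icc, mem_Ioo, mem_singleton] at hx hx1 ⊢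
    omega
  have := card_add_one_le_two_mul_card_parts_subset hnc hP sdiff_subset hUP h1
    (fun x hx => (mem_Icc.1 (mem_sdiff.1 hx).1).1) hE
  rw [card_sdiff_of_subset hIoo, Nat.card_Icc, Nat.card_Ioo, Nat.add_sub_cancel,
    card_singleton] at this
  omega

end Arcs

theorem stmt5 (n : ℕ) (P : Finpartition (Finset.Icc 1 (2 * n + 1)))
    (h : SpecialPartition n P) (B : Finset ℕ) (hB : B ∈ P.parts)
    (b b' k : ℕ) (hb : b ∈ B) (hb' : b' ∈ B) (hlt : b < b')
    (hbetween : ∀ x ∈ B, ¬ (b < x ∧ x < b'))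
    (hk : b' - b = 2 * k) :
    (P.parts.filter (fun C => ∃ x ∈ C, b < x ∧ x < b')).card = k ∧
    (∀ C ∈ P.parts, (∃ x ∈ C, b < x ∧ x < b') → ∀ x ∈ C, b < x ∧ x < b') := by
  obtain ⟨hnc, hP, hcard⟩ := h
  have hbI := mem_Icc.1 (P.le hB hb)
  have hb'I := mem_Icc.1 (P.le hB hb')
  have hI (x) (hx : x ∈ Ioo b b') : P.part x ⊆ Ioo b b' :=
    hnc.part_subset_Ioo hB hb hb' hbetween hx
  have hcontained (C) (hC : C ∈ P.parts) (hCI : ∃ x ∈ C, b < x ∧ x < b') :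
      C ⊆ Ioo b b' := by
    obtain ⟨x, hxC, hx⟩ := hCI
    exact P.part_eq_of_mem hC hxC ▸ hI x (mem_Ioo.2 hx)
  refine ⟨?_, fun C hC hCI x hx => mem_Ioo.1 (hcontained C hC hCI hx)⟩
  have hin : P.parts.filter (fun C => ∃ x ∈ C, b < x ∧ x < b') =
      P.parts.filter (· ⊆ Ioo b b') :=
    filter_congr fun C hC => ⟨hcontained C hC, fun hCI =>
      let ⟨x, hx⟩ := P.nonempty_of_mem_parts hC; ⟨x, hx, mem_Ioo.1 (hCI hx)⟩⟩
  have hout : P.parts.filter (fun C => ¬ ∃ x ∈ C, b < x ∧ x < b') =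
      P.parts.filter (· ⊆ Icc 1 (2 * n + 1) \ Ioo b b') :=
    filter_congr fun C hC =>
      ⟨fun hCI x hx => mem_sdiff.2 ⟨P.le hC hx, fun hxI => hCI ⟨x, hx, mem_Ioo.1 hxI⟩⟩,
        fun hCO ⟨x, hx, hxI⟩ => (mem_sdiff.1 (hCO hx)).2 (mem_Ioo.2 hxI)⟩
  have hinner := le_two_mul_card_parts_subset_Ioo hnc hP hI (by omega) hb'I.2
  have houter := le_two_mul_card_parts_subset_sdiff_Ioo hnc hP hI hbI.1 hlt hb'I.2
  have hsplit :=
    card_filter_add_card_filter_not (s := P.parts) fun C => ∃ x ∈ C, b < x ∧ x < b'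
  rw [hin, hout, hcard] at hsplit
  rw [hin]
  omega
end

section
/- Let π be a special partition of [2n+1] and b < b' consecutive entries of a block of π. Then the restriction of π to the interval {b+1, ..., b'-1}, relabeled to {1, ..., b'-b-1}, is itself a special partition of [b'-b-1] (i.e., non-crossing, no block with two consecutive integers, and with (b'-b)/2 blocks). -/
open scoped Classical

/-!
Read a partition through its block map `x ↦ block of x`, i.e. as a colouring of `ℕ`. A
non-crossing colouring of an interval of length `ℓ` that gives adjacent points different colours
uses at least `(ℓ + 1) / 2` colours: split at the previous occurrence of the colour of the last
point. Since `b < b'` are consecutive in their block, non-crossing makes the colours of the gap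
`(b, b')` private to it, and the complement of the gap, with `b'` glued to `b`, is again such a
colouring. The two lower bounds, `(b' - b) / 2` for the gap and `(2n + 2 - (b' - b)) / 2` for the
rest, add up to the `n + 1` blocks of the special partition, so both are attained.
-/

open Finset

theorem Finset.card_image_eq_of_eq_iff {α β γ : Type*} [DecidableEq β] [DecidableEq γ]
    {s : Finset α} {f : α → β} {g : α → γ} (h : ∀ a ∈ s, ∀ b ∈ s, f a = f b ↔ g a = g b) :
    #(s.image f) = #(s.image g) := by
  classical
  induction s using Finset.induction_on with
  | empty => simp
  | insert a s _ ih =>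
    have hmem : f a ∈ s.image f ↔ g a ∈ s.image g := by
      simp only [mem_image]
      exact exists_congr fun x => and_congr_right fun hx =>
        h x (mem_insert_of_mem hx) a (mem_insert_self a s)
    have ih := ih fun x hx y hy => h x (mem_insert_of_mem hx) y (mem_insert_of_mem hy)
    rw [image_insert, image_insert]
    by_cases hfa : f a ∈ s.image f
    · rw [card_insert_of_mem hfa, card_insert_of_mem (hmem.1 hfa), ih]
    · rw [card_insert_of_notMem hfa, card_insert_of_notMem (mt hmem.2 hfa), ih]

section Coloring

variable {α : Type*} {f : ℕ → α}

def NonCrossingOn (f : ℕ → α) (S : Set ℕ) : Prop :=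
  ∀ a ∈ S, ∀ b ∈ S, ∀ c ∈ S, ∀ d ∈ S, a < b → b < c → c < d → f a = f c → f b = f d →
    f a = f b

def NoConsecOn (f : ℕ → α) (S : Set ℕ) : Prop :=
  ∀ i ∈ S, i + 1 ∈ S → f i ≠ f (i + 1)

theorem NonCrossingOn.comp {g : ℕ → ℕ} {S T : Set ℕ} (h : NonCrossingOn f T)
    (hg : StrictMonoOn g S) (hST : Set.MapsTo g S T) : NonCrossingOn (f ∘ g) S :=
  fun _ ha _ hb _ hc _ hd hab hbc hcd hac hbd =>
    h _ (hST ha) _ (hST hb) _ (hST hc) _ (hST hd) (hg ha hb hab) (hg hb hc hbc) (hg hc hd hcd)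
      hac hbd

theorem NonCrossingOn.mono {S T : Set ℕ} (h : NonCrossingOn f T) (hST : S ⊆ T) :
    NonCrossingOn f S :=
  h.comp strictMonoOn_id hST

theorem NoConsecOn.mono {S T : Set ℕ} (h : NoConsecOn f T) (hST : S ⊆ T) :
    NoConsecOn f S :=
  fun i hi hi' => h i (hST hi) (hST hi')

theorem NonCrossingOn.comp_add_left {N b m : ℕ} (h : NonCrossingOn f (Set.Icc 1 N))
    (hm : b + m ≤ N) : NonCrossingOn (fun x => f (b + x)) (Set.Icc 1 m) :=
  h.comp (fun _ _ _ _ hxy => by omega) fun _ hx => by simp only [Set.mem_Icc] at hx ⊢; omega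

theorem NoConsecOn.comp_add_left {N b m : ℕ} (h : NoConsecOn f (Set.Icc 1 N))
    (hm : b + m ≤ N) : NoConsecOn (fun x => f (b + x)) (Set.Icc 1 m) :=
  fun i hi hi' => h (b + i) (by simp only [Set.mem_Icc] at hi ⊢; omega)
    (by simp only [Set.mem_Icc] at hi' ⊢; omega)

theorem NonCrossingOn.ne_of_mem_gap {S : Set ℕ} (h : NonCrossingOn f S)
    {j t : ℕ} (hj : j ∈ S) (ht : t ∈ S) (hjt : f j = f t)
    (hgap : ∀ x ∈ S, j < x → x < t → f x ≠ f t) {x y : ℕ} (hx : x ∈ S) (hjx : j < x)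
    (hxt : x < t) (hy : y ∈ S) (hy' : y ≤ j ∨ t ≤ y) : f x ≠ f y := by
  intro hxy
  apply hgap x hx hjx hxt
  rcases hy' with hyj | hty
  · rcases hyj.lt_or_eq with hyj | rfl
    · rw [hxy, h y hy j hj x hx t ht hyj hjx hxt hxy.symm hjt, hjt]
    · rw [hxy, hjt]
  · rcases hty.lt_or_eq with hty | rfl
    · rw [← hjt]
      exact (h j hj x hx t ht y hy hjx hxt hty hjt hxy).symm
    · exact hxy

theorem card_image_Icc_eq_add_of_last [DecidableEq α] {s j t : ℕ}
    (hnc : NonCrossingOn f (Set.Icc s t)) (hsj : s ≤ j) (hjt : j < t) (heq : f j = f t)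
    (hlast : ∀ x, j < x → x < t → f x ≠ f t) :
    #((Icc s t).image f) = #((Icc s j).image f) + #((Icc (j + 1) (t - 1)).image f) := by
  have hsplit : (Icc s t).image f = (Icc s j).image f ∪ (Icc (j + 1) (t - 1)).image f := by
    ext y
    simp only [mem_image, mem_union, mem_Icc]
    constructor
    · rintro ⟨x, hx, rfl⟩
      by_cases hxj : x ≤ j
      · exact Or.inl ⟨x, ⟨hx.1, hxj⟩, rfl⟩
      by_cases hxt : x = t
      · exact Or.inl ⟨j, ⟨hsj, le_rfl⟩, hxt ▸ heq⟩
      · exact Or.inr ⟨x, ⟨by omega, by omega⟩, rfl⟩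
    · rintro (⟨x, hx, rfl⟩ | ⟨x, hx, rfl⟩) <;> exact ⟨x, ⟨by omega, by omega⟩, rfl⟩
  have hdisj : Disjoint ((Icc s j).image f) ((Icc (j + 1) (t - 1)).image f) := by
    simp only [disjoint_left, mem_image, mem_Icc, not_exists, not_and]
    rintro _ ⟨y, hy, rfl⟩ x hx hxy
    exact hnc.ne_of_mem_gap ⟨hsj, hjt.le⟩ ⟨by omega, le_rfl⟩ heq (fun x _ => hlast x)
      ⟨by omega, by omega⟩ (by omega) (by omega) ⟨hy.1, by omega⟩ (Or.inl hy.2) hxy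
  rw [hsplit, card_union_of_disjoint hdisj]

theorem card_lt_two_mul_card_image [DecidableEq α] {s t : ℕ} (hst : s ≤ t)
    (hnc : NonCrossingOn f (Set.Icc s t)) (hnk : NoConsecOn f (Set.Icc s t)) :
    #(Icc s t) < 2 * #((Icc s t).image f) := by
  induction t using Nat.strong_induction_on generalizing s with
  | _ t ih =>
  by_cases hrep : ∃ j ∈ Ico s t, f j = f t
  · have hJ := filter_nonempty_iff.2 hrep
    obtain ⟨j, hjJ, hjmax⟩ : ∃ j ∈ (Ico s t).filter (f · = f t),
        ∀ x ∈ (Ico s t).filter (f · = f t), x ≤ j :=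
      ⟨_, max'_mem _ hJ, fun x hx => le_max' _ x hx⟩
    obtain ⟨hj, hjt⟩ := mem_filter.1 hjJ
    rw [mem_Ico] at hj
    have hlast : ∀ x, j < x → x < t → f x ≠ f t := fun x hjx hxt hfx =>
      (hjmax x (mem_filter.2 ⟨mem_Ico.2 ⟨by omega, hxt⟩, hfx⟩)).not_gt hjx
    have hj2 : j + 1 < t := by
      by_contra! hle
      exact hnk j ⟨hj.1, by omega⟩ ⟨by omega, by omega⟩ (by rwa [show j + 1 = t by omega])
    have hleft := ih j hj.2 hj.1 (hnc.mono (Set.Icc_subset_Icc_right hj.2.le))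
      (hnk.mono (Set.Icc_subset_Icc_right hj.2.le))
    have hsub : Set.Icc (j + 1) (t - 1) ⊆ Set.Icc s t := Set.Icc_subset_Icc (by omega) (by omega)
    have hright := ih (t - 1) (by omega) (by omega) (hnc.mono hsub) (hnk.mono hsub)
    rw [card_image_Icc_eq_add_of_last hnc hj.1 hj.2 hjt hlast]
    simp only [Nat.card_Icc] at hleft hright ⊢
    omega
  · push Not at hrep
    rcases hst.eq_or_lt with rfl | hst
    · simp
    have hsub : Set.Icc s (t - 1) ⊆ Set.Icc s t := Set.Icc_subset_Icc_right (by omega)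
    have hprev := ih (t - 1) (by omega) (by omega) (hnc.mono hsub) (hnk.mono hsub)
    have hnew : f t ∉ (Icc s (t - 1)).image f := by
      simp only [mem_image, mem_Icc, not_exists, not_and]
      exact fun x hx hfx => hrep x (mem_Ico.2 ⟨hx.1, by omega⟩) hfx
    have hinsert : (Icc s t).image f = insert (f t) ((Icc s (t - 1)).image f) := by
      rw [← image_insert, insert_Icc_sub_one_right_eq_Icc hst.le]
    rw [hinsert, card_insert_of_notMem hnew]
    simp only [Nat.card_Icc] at hprev ⊢
    omega

-- The complement of a gap `(b, b')` is read through `skip b (b' - b)`, which drops `b'` as well: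
-- otherwise `b` and `b'` would become adjacent points of the same colour.
def skip (b k x : ℕ) : ℕ := if x ≤ b then x else x + k

theorem strictMono_skip (b k : ℕ) : StrictMono (skip b k) := by
  intro x y hxy
  simp only [skip]
  split_ifs <;> omega

theorem mapsTo_skip (b k N : ℕ) :
    Set.MapsTo (skip b k) (Set.Icc 1 (N - k)) (Set.Icc 1 N) := by
  intro x hx
  simp only [skip, Set.mem_Icc] at hx ⊢
  split_ifs <;> omega

theorem card_lt_two_mul_card_image_skip [DecidableEq α] {N b b' : ℕ}
    (hnc : NonCrossingOn f (Set.Icc 1 N)) (hnk : NoConsecOn f (Set.Icc 1 N))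
    (hb : b ∈ Set.Icc 1 N) (hb' : b' ∈ Set.Icc 1 N) (hlt : b < b') (heq : f b = f b') :
    N - (b' - b) < 2 * #((Icc 1 (N - (b' - b))).image (f ∘ skip b (b' - b))) := by
  have hnk' : NoConsecOn (f ∘ skip b (b' - b)) (Set.Icc 1 (N - (b' - b))) := by
    intro i hi hi'
    simp only [skip, Function.comp_apply, Set.mem_Icc] at hi hi' hb' ⊢
    split_ifs with h1 h2 h2
    · exact hnk i ⟨hi.1, by omega⟩ ⟨by omega, by omega⟩
    · rw [show i = b by omega, heq, show b + 1 + (b' - b) = b' + 1 by omega]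
      exact hnk b' hb' ⟨by omega, by omega⟩
    · omega
    · rw [show i + 1 + (b' - b) = i + (b' - b) + 1 by omega]
      exact hnk _ ⟨by omega, by omega⟩ ⟨by omega, by omega⟩
  have hN : 1 ≤ N - (b' - b) := by simp only [Set.mem_Icc] at hb hb'; omega
  simpa [Nat.card_Icc] using card_lt_two_mul_card_image hN
    (hnc.comp ((strictMono_skip b (b' - b)).strictMonoOn _) (mapsTo_skip b (b' - b) N)) hnk'

theorem image_Icc_eq_union_skip [DecidableEq α] {N b b' : ℕ}
    (hb : b ∈ Set.Icc 1 N) (hb' : b' ∈ Set.Icc 1 N) (hlt : b < b') (heq : f b = f b') :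
    (Icc 1 N).image f =
      (Icc (b + 1) (b' - 1)).image f ∪ (Icc 1 (N - (b' - b))).image (f ∘ skip b (b' - b)) := by
  simp only [Set.mem_Icc] at hb hb'
  ext y
  simp only [mem_union, mem_image, mem_Icc, Function.comp_apply, skip]
  constructor
  · rintro ⟨x, hx, rfl⟩
    by_cases hxb : x ≤ b
    · exact Or.inr ⟨x, ⟨hx.1, by omega⟩, by rw [if_pos hxb]⟩
    by_cases hxb' : x < b'
    · exact Or.inl ⟨x, ⟨by omega, by omega⟩, rfl⟩
    rcases (not_lt.1 hxb').eq_or_lt with rfl | hxb'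
    · exact Or.inr ⟨b, ⟨hb.1, by omega⟩, by rw [if_pos le_rfl, heq]⟩
    · exact Or.inr ⟨x - (b' - b), ⟨by omega, by omega⟩, by rw [if_neg (by omega)]; congr; omega⟩
  · rintro (⟨x, hx, rfl⟩ | ⟨x, hx, rfl⟩)
    · exact ⟨x, ⟨by omega, by omega⟩, rfl⟩
    · split_ifs
      · exact ⟨x, ⟨hx.1, by omega⟩, rfl⟩
      · exact ⟨x + (b' - b), ⟨by omega, by omega⟩, rfl⟩

theorem two_mul_card_image_gap [DecidableEq α] {N b b' : ℕ}
    (hnc : NonCrossingOn f (Set.Icc 1 N)) (hnk : NoConsecOn f (Set.Icc 1 N))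
    (hcard : 2 * #((Icc 1 N).image f) = N + 1) (hb : b ∈ Set.Icc 1 N) (hb' : b' ∈ Set.Icc 1 N)
    (hlt : b < b') (heq : f b = f b') (hgap : ∀ x ∈ Set.Icc 1 N, b < x → x < b' → f x ≠ f b') :
    2 * #((Icc (b + 1) (b' - 1)).image f) = b' - b := by
  have hb1 := hb.1
  have hb'N := hb'.2
  have hb2 : b + 1 < b' := by
    by_contra! hle
    exact hnk b hb ⟨by omega, by omega⟩ (by rwa [show b + 1 = b' by omega])
  have hsub : Set.Icc (b + 1) (b' - 1) ⊆ Set.Icc 1 N := Set.Icc_subset_Icc (by omega) (by omega)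
  have hin := card_lt_two_mul_card_image (by omega) (hnc.mono hsub) (hnk.mono hsub)
  have hout := card_lt_two_mul_card_image_skip hnc hnk hb hb' hlt heq
  have hdisj : Disjoint ((Icc (b + 1) (b' - 1)).image f)
      ((Icc 1 (N - (b' - b))).image (f ∘ skip b (b' - b))) := by
    simp only [disjoint_left, mem_image, not_exists, not_and]
    rintro _ ⟨x, hx, rfl⟩ y hy hxy
    rw [mem_Icc] at hx
    have hskip : skip b (b' - b) y ≤ b ∨ b' ≤ skip b (b' - b) y := by
      simp only [skip]
      split_ifs <;> omega
    exact hnc.ne_of_mem_gap hb hb' heq hgap (hsub hx) (by omega) (by omega)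
      (mapsTo_skip b (b' - b) N (by simpa using hy)) hskip hxy.symm
  rw [image_Icc_eq_union_skip hb hb' hlt heq, card_union_of_disjoint hdisj] at hcard
  simp only [Nat.card_Icc] at hin hout
  omega

end Coloring

section Finpartition

variable {α : Type*} {m : ℕ}

theorem sameBlock_iff_part_eq_s6 (R : Finpartition (Icc 1 m)) (x y : ℕ) :
    SameBlock R x y ↔ x ∈ Icc 1 m ∧ y ∈ Icc 1 m ∧ R.part x = R.part y := by
  constructor
  · rintro ⟨B, hB, hx, hy⟩
    exact ⟨R.le hB hx, R.le hB hy, by rw [R.part_eq_of_mem hB hx, R.part_eq_of_mem hB hy]⟩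
  · rintro ⟨hx, hy, hxy⟩
    exact ⟨R.part x, R.part_mem.2 hx, R.mem_part_self.2 hx, hxy ▸ R.mem_part_self.2 hy⟩

theorem sameBlock_ofSetSetoid_ker (f : ℕ → α) (x y : ℕ) :
    SameBlock (Finpartition.ofSetSetoid (Setoid.ker f) (Icc 1 m)) x y ↔
      x ∈ Icc 1 m ∧ y ∈ Icc 1 m ∧ f x = f y := by
  rw [SameBlock, ← Finpartition.mem_part_iff_exists, Finpartition.mem_part_ofSetSetoid_iff_rel,
    Setoid.ker_def]
  tauto

variable {R : Finpartition (Icc 1 m)} {f : ℕ → α}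

theorem nonCrossing_iff_of_sameBlock_iff
    (hf : ∀ x y, SameBlock R x y ↔ x ∈ Icc 1 m ∧ y ∈ Icc 1 m ∧ f x = f y) :
    NonCrossing R ↔ NonCrossingOn f (Set.Icc 1 m) := by
  simp only [NonCrossing, NonCrossingOn, hf, ← coe_Icc, mem_coe]
  constructor
  · intro h a ha b hb c hc d hd hab hbc hcd hac hbd
    exact (h a b c d hab hbc hcd ⟨ha, hc, hac⟩ ⟨hb, hd, hbd⟩).2.2
  · rintro h a b c d hab hbc hcd ⟨ha, hc, hac⟩ ⟨hb, hd, hbd⟩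
    exact ⟨ha, hb, h a ha b hb c hc d hd hab hbc hcd hac hbd⟩

theorem noConsec_iff_of_sameBlock_iff
    (hf : ∀ x y, SameBlock R x y ↔ x ∈ Icc 1 m ∧ y ∈ Icc 1 m ∧ f x = f y) :
    NoConsec R ↔ NoConsecOn f (Set.Icc 1 m) := by
  simp only [NoConsec, NoConsecOn, hf, ← coe_Icc, mem_coe, not_and]

theorem card_parts_eq_of_sameBlock_iff [DecidableEq α]
    (hf : ∀ x y, SameBlock R x y ↔ x ∈ Icc 1 m ∧ y ∈ Icc 1 m ∧ f x = f y) :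
    #R.parts = #((Icc 1 m).image f) := by
  have hparts : (Icc 1 m).image R.part = R.parts := by
    ext B
    refine ⟨fun hB => ?_, fun hB => ?_⟩
    · obtain ⟨x, hx, rfl⟩ := mem_image.1 hB
      exact R.part_mem.2 hx
    · obtain ⟨x, hx⟩ := R.nonempty_of_mem_parts hB
      exact mem_image.2 ⟨x, R.le hB hx, R.part_eq_of_mem hB hx⟩
  rw [← hparts]
  refine card_image_eq_of_eq_iff fun x hx y hy => ?_
  simpa [hx, hy] using (sameBlock_iff_part_eq_s6 R x y).symm.trans (hf x y)

end Finpartition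

theorem stmt6 (n : ℕ) (P : Finpartition (Finset.Icc 1 (2 * n + 1)))
    (h : SpecialPartition n P) (B : Finset ℕ) (hB : B ∈ P.parts)
    (b b' : ℕ) (hb : b ∈ B) (hb' : b' ∈ B) (hlt : b < b')
    (hbetween : ∀ x ∈ B, ¬ (b < x ∧ x < b')) :
    ∃ Q : Finpartition (Finset.Icc 1 (b' - b - 1)),
      NonCrossing Q ∧ NoConsec Q ∧ Q.parts.card = (b' - b) / 2 ∧
      ∀ x y : ℕ, 1 ≤ x → x < y → y ≤ b' - b - 1 →
        (SameBlock Q x y ↔ SameBlock P (b + x) (b + y)) := by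
  obtain ⟨hNC, hNK, hcard⟩ := h
  have hP := sameBlock_iff_part_eq_s6 P
  have hnc := (nonCrossing_iff_of_sameBlock_iff hP).1 hNC
  have hnk := (noConsec_iff_of_sameBlock_iff hP).1 hNK
  have hbI : b ∈ Set.Icc 1 (2 * n + 1) := by simpa using P.le hB hb
  have hb'I : b' ∈ Set.Icc 1 (2 * n + 1) := by simpa using P.le hB hb'
  have hgap : ∀ x ∈ Set.Icc 1 (2 * n + 1), b < x → x < b' → P.part x ≠ P.part b' := by
    intro x hx hbx hxb' hx'
    rw [P.part_eq_of_mem hB hb'] at hx'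
    exact hbetween x (hx' ▸ P.mem_part_self.2 (by simpa using hx)) ⟨hbx, hxb'⟩
  have hcard_gap := two_mul_card_image_gap hnc hnk
    (by rw [← card_parts_eq_of_sameBlock_iff hP, hcard]; ring) hbI hb'I hlt
    (by rw [P.part_eq_of_mem hB hb, P.part_eq_of_mem hB hb']) hgap
  have hQ := sameBlock_ofSetSetoid_ker (m := b' - b - 1) fun x => P.part (b + x)
  have hb'N := hb'I.2
  have hm : b + (b' - b - 1) ≤ 2 * n + 1 := by omega
  refine ⟨_, (nonCrossing_iff_of_sameBlock_iff hQ).2 (hnc.comp_add_left hm),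
    (noConsec_iff_of_sameBlock_iff hQ).2 (hnk.comp_add_left hm), ?_, fun x y hx hxy hy => ?_⟩
  · rw [card_parts_eq_of_sameBlock_iff hQ, ← Function.comp_def, ← image_image, image_add_left_Icc,
      show b + (b' - b - 1) = b' - 1 by omega]
    omega
  · rw [hQ, hP]
    simp only [mem_Icc]
    constructor <;> rintro ⟨-, -, he⟩ <;> exact ⟨by omega, by omega, he⟩
end

section
/- The cardinality of S_n (integer sequences s_1,...,s_n with 1 ≤ s_i ≤ i and s_i = j ⟹ s_{i-r} ≤ j-r for 1 ≤ r ≤ j-1) equals the n-th Catalan number C_n = (1/(n+1)) * binomial(2n, n). -/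
open scoped Classical

/-!
Setting `p i = i - s i`, a sequence in `S_n` is the list of parents `0 ≤ p i < i` of the nodes
`1, …, n` of a plane tree rooted at `0` and labelled in preorder: the condition on `s` says that
`p i ≤ p m` whenever `p i < m < i`, i.e. that the arcs `(p i, i)` do not cross. Splitting off the
subtree of node `1` from the remaining subtrees of the root is the left-child/right-sibling
correspondence with binary trees on `n` nodes, which are counted by the Catalan numbers.
-/

namespace ParentSeq

/-- `l.getD k 0` is the parent of node `k + 1`. -/
def IsValid (l : List ℕ) : Prop :=
  ∀ k < l.length, l.getD k 0 ≤ k ∧ ∀ j, l.getD k 0 ≤ j → j ≤ k → l.getD k 0 ≤ l.getD j 0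

lemma IsValid.getD_zero {l : List ℕ} (hl : IsValid l) : l.getD 0 0 = 0 := by
  rcases Nat.eq_zero_or_pos l.length with h | h
  · simp [List.length_eq_zero_iff.mp h]
  · exact Nat.le_zero.mp (hl 0 h).1

def shiftPos (m x : ℕ) : ℕ := if x = 0 then 0 else x + m

lemma shiftPos_sub_cancel (m x : ℕ) : shiftPos m x - m = x := by
  unfold shiftPos; split_ifs <;> omega

/-- The tree whose root has first subtree `a` and further subtrees `b`. -/
def join (a b : List ℕ) : List ℕ := 0 :: (a.map (· + 1) ++ b.map (shiftPos (a.length + 1)))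

def unjoin (l : List ℕ) : List ℕ × List ℕ :=
  ((l.tail.takeWhile (· ≠ 0)).map (· - 1),
    (l.tail.dropWhile (· ≠ 0)).map (· - ((l.tail.takeWhile (· ≠ 0)).length + 1)))

lemma getD_map_of_lt {f : ℕ → ℕ} {l : List ℕ} {k : ℕ} (h : k < l.length) :
    (l.map f).getD k 0 = f (l.getD k 0) := by
  simp [List.getD_eq_getElem?_getD, List.getElem?_eq_getElem h]

variable {a b l : List ℕ}

@[simp]
lemma length_join : (join a b).length = a.length + b.length + 1 := by
  simp [join]

lemma getD_join_succ {k : ℕ} (hk : k < a.length) :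
    (join a b).getD (k + 1) 0 = a.getD k 0 + 1 := by
  rw [join, List.getD_cons_succ, List.getD_append _ _ _ _ (by simpa), getD_map_of_lt hk]

lemma getD_join_add {q : ℕ} (hq : q < b.length) :
    (join a b).getD (a.length + 1 + q) 0 = shiftPos (a.length + 1) (b.getD q 0) := by
  rw [show a.length + 1 + q = a.length + q + 1 by omega, join, List.getD_cons_succ,
    List.getD_append_right _ _ _ _ (by simp)]
  simpa using getD_map_of_lt hq

lemma isValid_join_iff : IsValid (join a b) ↔ IsValid a ∧ IsValid b := by
  constructor
  · intro h
    refine ⟨fun k hk => ?_, fun q hq => ?_⟩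
    · have hk' := h (k + 1) (by simp; omega)
      rw [getD_join_succ hk] at hk'
      refine ⟨by omega, fun j hkj hjk => ?_⟩
      have := hk'.2 (j + 1) (by omega) (by omega)
      rw [getD_join_succ (by omega)] at this
      omega
    · have hq' := h (a.length + 1 + q) (by simp; omega)
      rw [getD_join_add hq] at hq'
      by_cases h0 : b.getD q 0 = 0
      · rw [h0]; exact ⟨Nat.zero_le _, fun _ _ _ => Nat.zero_le _⟩
      rw [shiftPos, if_neg h0] at hq'
      refine ⟨by omega, fun j hqj hjq => ?_⟩
      have := hq'.2 (a.length + 1 + j) (by omega) (by omega)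
      rw [getD_join_add (by omega), shiftPos] at this
      split_ifs at this <;> omega
  · rintro ⟨ha, hb⟩ k hk
    rw [length_join] at hk
    rcases k with _ | k
    · simp [join]
    rcases lt_or_ge k a.length with hka | hka
    · rw [getD_join_succ hka]
      have hak := ha k hka
      refine ⟨by omega, fun j hkj hjk => ?_⟩
      obtain ⟨j, rfl⟩ : ∃ j', j = j' + 1 := ⟨j - 1, by omega⟩
      rw [getD_join_succ (by omega)]
      have := hak.2 j (by omega) (by omega)
      omega
    obtain ⟨q, rfl⟩ : ∃ q, k = a.length + q := ⟨k - a.length, by omega⟩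
    have hq : q < b.length := by omega
    rw [show a.length + q + 1 = a.length + 1 + q by omega, getD_join_add hq]
    have hbq := hb q hq
    by_cases h0 : b.getD q 0 = 0
    · rw [h0, shiftPos, if_pos rfl]; exact ⟨Nat.zero_le _, fun _ _ _ => Nat.zero_le _⟩
    rw [shiftPos, if_neg h0]
    refine ⟨by omega, fun j hqj hjq => ?_⟩
    obtain ⟨j, rfl⟩ : ∃ j', j = a.length + 1 + j' := ⟨j - (a.length + 1), by omega⟩
    rw [getD_join_add (by omega), shiftPos]
    have := hbq.2 j (by omega) (by omega)
    split_ifs <;> omega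

lemma unjoin_join (hb : IsValid b) : unjoin (join a b) = (a, b) := by
  have hb0 : ∀ h : 0 < b.length, b[0] = 0 := fun h => by
    simpa only [List.getD_eq_getElem _ _ h] using hb.getD_zero
  have hpos : ∀ x ∈ a.map (· + 1), (x ≠ 0 : Bool) := by simp
  have htake : (b.map (shiftPos (a.length + 1))).takeWhile (· ≠ 0) = [] :=
    List.takeWhile_eq_nil_iff.mpr fun h => by simp [hb0, shiftPos]
  have hdrop : (b.map (shiftPos (a.length + 1))).dropWhile (· ≠ 0) =
      b.map (shiftPos (a.length + 1)) :=
    List.dropWhile_eq_self_iff.mpr fun h => by simp [hb0, shiftPos]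
  simp only [unjoin, join, List.tail_cons, List.takeWhile_append_of_pos hpos,
    List.dropWhile_append_of_pos hpos, htake, hdrop, List.append_nil, List.map_map]
  simp [Function.comp_def, shiftPos_sub_cancel]


lemma join_unjoin (hl : IsValid l) (hne : l ≠ []) : join (unjoin l).1 (unjoin l).2 = l := by
  obtain ⟨x, r, rfl⟩ := List.exists_cons_of_ne_nil hne
  obtain rfl : x = 0 := hl.getD_zero
  set A := r.takeWhile (· ≠ 0) with hA
  set B := r.dropWhile (· ≠ 0) with hB
  have hAB : A ++ B = r := List.takeWhile_append_dropWhile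
  have hA0 : ∀ y ∈ A, y ≠ 0 := fun y hy => by simpa using List.mem_takeWhile_imp hy
  have hB0 : ∀ h : 0 < B.length, B[0] = 0 := fun h => by
    have h0 := List.head_dropWhile_not (· ≠ 0) (List.ne_nil_of_length_pos h)
    simpa only [List.head_eq_getElem, decide_eq_false_iff_not, not_not] using h0
  have hgetB : ∀ q (hq : q < B.length), (0 :: r).getD (A.length + 1 + q) 0 = B[q] := fun q hq => by
    rw [show A.length + 1 + q = A.length + q + 1 by omega, List.getD_cons_succ, ← hAB,
      List.getD_append_right _ _ _ _ (by omega), Nat.add_sub_cancel_left, List.getD_eq_getElem]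
  -- a parent pointer cannot jump over the root-level node at index `A.length + 1`
  have hBbig : ∀ y ∈ B, y = 0 ∨ A.length + 1 < y := by
    rw [List.forall_mem_iff_getElem]
    intro q hq
    have h := (hl (A.length + 1 + q) (by simp [← hAB]; omega)).2 (A.length + 1)
    rw [hgetB q hq, ← add_zero (A.length + 1), hgetB 0 (by omega), hB0] at h
    omega
  simp only [unjoin, join, List.tail_cons, ← hA, ← hB, List.length_map, List.map_map]
  conv_rhs => rw [← hAB]
  congr 2
  · conv_rhs => rw [← List.map_id A]
    refine List.map_congr_left fun y hy => ?_
    have := hA0 y hy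
    simp only [Function.comp_apply, id_eq]
    omega
  · conv_rhs => rw [← List.map_id B]
    refine List.map_congr_left fun y hy => ?_
    simp only [Function.comp_apply, id_eq, shiftPos]
    split_ifs <;> have := hBbig y hy <;> omega


def ofTree : BinaryTree Unit → List ℕ
  | .nil => []
  | .node _ A B => join (ofTree A) (ofTree B)

@[simp]
lemma length_ofTree (T : BinaryTree Unit) : (ofTree T).length = T.numNodes := by
  induction T with
  | nil => rfl
  | node _ A B ihA ihB => simp [ofTree, ihA, ihB]

lemma isValid_ofTree (T : BinaryTree Unit) : IsValid (ofTree T) := by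
  induction T with
  | nil => simp [IsValid, ofTree]
  | node _ A B ihA ihB => exact isValid_join_iff.mpr ⟨ihA, ihB⟩

lemma ofTree_injective : Function.Injective ofTree := by
  intro T
  induction T with
  | nil => rintro (_ | _) h <;> simp_all [ofTree, join]
  | node _ A B ihA ihB =>
    rintro (_ | ⟨_, A', B'⟩) h
    · simp [ofTree, join] at h
    · have h' := congrArg unjoin h
      simp only [ofTree, unjoin_join (isValid_ofTree _), Prod.mk.injEq] at h'
      rw [ihA h'.1, ihB h'.2]

lemma exists_ofTree_eq (hl : IsValid l) : ∃ T, ofTree T = l := by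
  induction hn : l.length using Nat.strong_induction_on generalizing l with
  | _ n ih =>
    rcases eq_or_ne l [] with rfl | hne
    · exact ⟨.nil, rfl⟩
    have hjoin := join_unjoin hl hne
    have hlen := congrArg List.length hjoin
    rw [← hjoin, isValid_join_iff] at hl
    obtain ⟨A, hA⟩ := ih _ (by simp at hlen; omega) hl.1 rfl
    obtain ⟨B, hB⟩ := ih _ (by simp at hlen; omega) hl.2 rfl
    exact ⟨.node () A B, by rw [ofTree, hA, hB, hjoin]⟩


def toSeq (n : ℕ) (l : List ℕ) (i : ℕ) : ℕ :=
  if 1 ≤ i ∧ i ≤ n then i - l.getD (i - 1) 0 else 0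

def ofSeq (n : ℕ) (s : ℕ → ℕ) : List ℕ :=
  (List.range n).map fun k => k + 1 - s (k + 1)

variable {n : ℕ} {s : ℕ → ℕ}

lemma toSeq_of_le {i : ℕ} (h1 : 1 ≤ i) (h2 : i ≤ n) : toSeq n l i = i - l.getD (i - 1) 0 :=
  if_pos ⟨h1, h2⟩

lemma le_of_toSeq_ne_zero {i : ℕ} (h : toSeq n l i ≠ 0) : 1 ≤ i ∧ i ≤ n := by
  by_contra hi
  exact h (if_neg hi)

lemma inS_toSeq (hl : IsValid l) (hlen : l.length = n) : InS n (toSeq n l) := by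
  refine ⟨fun i h1 h2 => ?_, fun i j r h1 h2 hj hr1 hrj => ?_⟩
  · have := (hl (i - 1) (by omega)).1
    rw [toSeq_of_le h1 h2]
    omega
  · rw [toSeq_of_le h1 h2] at hj
    have hpi := hl (i - 1) (by omega)
    have hpir := (hl (i - r - 1) (by omega)).1
    rw [toSeq_of_le (by omega) (by omega)]
    have := hpi.2 (i - r - 1) (by omega) (by omega)
    omega

@[simp]
lemma length_ofSeq : (ofSeq n s).length = n := by simp [ofSeq]

lemma getD_ofSeq {k : ℕ} (hk : k < n) : (ofSeq n s).getD k 0 = k + 1 - s (k + 1) := by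
  rw [ofSeq, getD_map_of_lt (by simpa), List.getD_eq_getElem _ _ (by simpa), List.getElem_range]

lemma isValid_ofSeq (hs : InS n s) : IsValid (ofSeq n s) := by
  intro k hk
  rw [length_ofSeq] at hk
  rw [getD_ofSeq hk]
  have hsk := hs.1 (k + 1) (by omega) (by omega)
  refine ⟨by omega, fun j hkj hjk => ?_⟩
  rw [getD_ofSeq (by omega)]
  rcases hjk.eq_or_lt with rfl | hjk
  · rfl
  have hsj := hs.1 (j + 1) (by omega) (by omega)
  have := hs.2 (k + 1) (s (k + 1)) (k - j) (by omega) (by omega) rfl (by omega) (by omega)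
  rw [show k + 1 - (k - j) = j + 1 by omega] at this
  omega

lemma toSeq_ofSeq (hs : InS n s) (hsupp : ∀ i, s i ≠ 0 → 1 ≤ i ∧ i ≤ n) :
    toSeq n (ofSeq n s) = s := by
  funext i
  by_cases hi : 1 ≤ i ∧ i ≤ n
  · have := hs.1 i hi.1 hi.2
    rw [toSeq_of_le hi.1 hi.2, getD_ofSeq (by omega), Nat.sub_add_cancel hi.1]
    omega
  · rw [toSeq, if_neg hi]
    by_contra h
    exact hi (hsupp i (Ne.symm h))

lemma ofSeq_toSeq (hl : IsValid l) (hlen : l.length = n) : ofSeq n (toSeq n l) = l := by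
  refine List.ext_getElem (by simp [hlen]) fun k hk hk' => ?_
  rw [← List.getD_eq_getElem _ 0 hk, ← List.getD_eq_getElem _ 0 hk', getD_ofSeq (by simpa using hk),
    toSeq_of_le (by omega) (by omega), Nat.add_sub_cancel]
  have := (hl k hk').1
  omega

lemma setOf_inS_eq_image_ofTree (n : ℕ) :
    {s : ℕ → ℕ | InS n s ∧ ∀ i, s i ≠ 0 → 1 ≤ i ∧ i ≤ n} =
      (fun T => toSeq n (ofTree T)) '' {T | T.numNodes = n} := by
  ext s
  constructor
  · rintro ⟨hs, hsupp⟩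
    obtain ⟨T, hT⟩ := exists_ofTree_eq (isValid_ofSeq hs)
    refine ⟨T, ?_, ?_⟩
    · rw [Set.mem_ofPred_eq, ← length_ofTree, hT, length_ofSeq]
    · simp only [hT, toSeq_ofSeq hs hsupp]
  · rintro ⟨T, hT, rfl⟩
    exact ⟨inS_toSeq (isValid_ofTree T) (by simpa using hT), fun i => le_of_toSeq_ne_zero⟩

lemma injOn_toSeq_ofTree (n : ℕ) :
    Set.InjOn (fun T => toSeq n (ofTree T)) {T | T.numNodes = n} := by
  intro T hT T' hT' h
  apply ofTree_injective
  rw [← ofSeq_toSeq (isValid_ofTree T) (by simpa using hT),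
    ← ofSeq_toSeq (isValid_ofTree T') (by simpa using hT')]
  exact congrArg (ofSeq n) h

end ParentSeq

open ParentSeq in
theorem stmt15 (n : ℕ) :
    Set.ncard {s : ℕ → ℕ | InS n s ∧ ∀ i : ℕ, s i ≠ 0 → 1 ≤ i ∧ i ≤ n} =
      (2 * n).choose n / (n + 1) := by
  have htrees : {T : BinaryTree Unit | T.numNodes = n} = ↑(BinaryTree.treesOfNumNodesEq n) := by
    ext T
    simp
  rw [setOf_inS_eq_image_ofTree, (injOn_toSeq_ofTree n).ncard_image, htrees,
    Set.ncard_coe_finset, BinaryTree.treesOfNumNodesEq_card_eq_catalan, catalan_eq_centralBinom_div,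
    Nat.centralBinom]
end
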